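/- arXiv:0908.0637 — 6 statements merged into one kernel-verified Lean document; each statement's English description precedes it below -/
import Mathlib

section
/- Let H be a Hilbert space, L a closed subspace, and S a linear contraction of H (i.e. ‖Sx‖ ≤ ‖x‖ for all x) such that S(L) ⊆ L and the union of the preimages S⁻ⁿ(L) over n ≥ 0 is dense in H. If the restriction of S to L has a unique fixed point φ ∈ L, then φ is the unique fixed point of S in H. -/
/-- A point of the closure of the union is close to some `y` with `f^[n] y ∈ s`; since `x` is
fixed by the nonexpanding map `f^[n]`, the point `f^[n] y ∈ s` is at least as close to `x`. -/
theorem Function.IsFixedPt.mem_closure_of_mem_closure_iUnion_preimage_iterate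
    {X : Type*} [PseudoEMetricSpace X] {f : X → X} (hf : LipschitzWith 1 f) {x : X}
    (hx : Function.IsFixedPt f x) {s : Set X} (hxs : x ∈ closure (⋃ n : ℕ, f^[n] ⁻¹' s)) :
    x ∈ closure s := by
  rw [EMetric.mem_closure_iff] at hxs ⊢
  intro ε hε
  obtain ⟨y, hy, hxy⟩ := hxs ε hε
  obtain ⟨n, hn⟩ := Set.mem_iUnion.mp hy
  refine ⟨f^[n] y, hn, lt_of_le_of_lt ?_ hxy⟩
  calc edist x (f^[n] y) = edist (f^[n] x) (f^[n] y) := by rw [(hx.iterate n).eq]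
    _ ≤ edist x y := by simpa using (hf.iterate n).edist_le_mul x y

theorem stmt0_general {𝕜 : Type*} [RCLike 𝕜] {H : Type*} [NormedAddCommGroup H]
    [InnerProductSpace 𝕜 H]
    (L : Submodule 𝕜 H) (hLclosed : IsClosed (L : Set H))
    (S : H →L[𝕜] H) (hS : ∀ x : H, ‖S x‖ ≤ ‖x‖)
    (hdense : Dense (⋃ n : ℕ, (⇑(S ^ n)) ⁻¹' (L : Set H)))
    (φ : H)
    (huniq : ∀ x ∈ L, S x = x → x = φ) :
    ∀ x : H, S x = x → x = φ := by
  intro x hx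
  have hS_lipschitz : LipschitzWith 1 S := by
    simpa using AddMonoidHomClass.lipschitz_of_bound S 1 (by simpa using hS)
  simp only [FunLike.coe_pow_eq_iterate] at hdense
  have hxL : x ∈ closure (L : Set H) :=
    Function.IsFixedPt.mem_closure_of_mem_closure_iUnion_preimage_iterate hS_lipschitz hx
      (hdense x)
  exact huniq x (hLclosed.closure_subset hxL) hx

/-- If `S` is a linear contraction of a Hilbert space `H`, `L` a closed subspace with
`S(L) ⊆ L` whose preimages `S⁻ⁿ(L)` have dense union, and the restriction of `S` to `L`
has a unique fixed point `φ ∈ L`, then `φ` is the unique fixed point of `S` in `H`. -/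
theorem stmt0 {𝕜 : Type*} [RCLike 𝕜] {H : Type*} [NormedAddCommGroup H]
    [InnerProductSpace 𝕜 H] [CompleteSpace H]
    (L : Submodule 𝕜 H) (hLclosed : IsClosed (L : Set H))
    (S : H →L[𝕜] H) (hS : ∀ x : H, ‖S x‖ ≤ ‖x‖)
    (hSL : ∀ x ∈ L, S x ∈ L)
    (hdense : Dense (⋃ n : ℕ, (⇑(S ^ n)) ⁻¹' (L : Set H)))
    (φ : H) (hφL : φ ∈ L) (hφ : S φ = φ)
    (huniq : ∀ x ∈ L, S x = x → x = φ) :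
    ∀ x : H, S x = x → x = φ :=
  stmt0_general L hLclosed S hS hdense φ huniq
end

section
/- Let H be a Hilbert space, L a closed subspace, S a linear contraction of H, and f ∈ H a fixed point of S (Sf = f). If fₙ denotes the orthogonal projection of f onto the closed subspace S⁻ⁿ(L) (assumed closed), then S fₙ = fₙ for every n. -/
/-! A nearest point of a subspace `K` to `f` is unique: at the midpoint of two nearest points
the parallelogram law forces them to coincide. The subspace `K = S⁻ⁿ(L)` is `S`-invariant, and
since `S` is a contraction fixing `f`, the point `S fₙ ∈ K` is at least as close to `f` as `fₙ`;
hence `S fₙ = fₙ`. -/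

section NearestPoint

variable {𝕜 : Type*} [RCLike 𝕜] {H : Type*} [NormedAddCommGroup H] [InnerProductSpace 𝕜 H]

theorem Submodule.eq_of_norm_sub_le_of_forall_norm_sub_le {K : Submodule 𝕜 H} {x a b : H}
    (ha : a ∈ K) (hb : b ∈ K) (hmin : ∀ y ∈ K, ‖x - a‖ ≤ ‖x - y‖) (hba : ‖x - b‖ ≤ ‖x - a‖) :
    b = a := by
  set u := x - a
  set v := x - b
  have hmid : ‖u‖ ≤ ‖(2⁻¹ : 𝕜) • (u + v)‖ := by
    have hx : (2⁻¹ : 𝕜) • (u + v) = x - (2⁻¹ : 𝕜) • (a + b) := by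
      simp only [u, v, smul_add, smul_sub, ← add_smul, sub_add_sub_comm, ← two_mul]
      norm_num
    rw [hx]
    exact hmin _ (K.smul_mem _ (K.add_mem ha hb))
  have huv : 2 * ‖u‖ ≤ ‖u + v‖ := by
    rw [norm_smul, norm_inv, RCLike.norm_two] at hmid
    linarith
  have hpar := parallelogram_law_with_norm 𝕜 u v
  have hv : ‖v‖ ^ 2 ≤ ‖u‖ ^ 2 := pow_le_pow_left₀ (norm_nonneg _) hba 2
  have hsq : ‖u - v‖ ^ 2 ≤ 0 := by nlinarith [norm_nonneg u]
  have huv_zero : u - v = 0 := norm_eq_zero.mp (by nlinarith [norm_nonneg (u - v)])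
  rwa [sub_sub_sub_cancel_left, sub_eq_zero] at huv_zero

end NearestPoint

theorem ContinuousLinearMap.pow_apply_mem_of_mapsTo {R M : Type*} [Semiring R]
    [TopologicalSpace M] [AddCommMonoid M] [Module R M] {L : Submodule R M} {S : M →L[R] M}
    (hSL : ∀ x ∈ L, S x ∈ L) {n : ℕ} {x : M} (hx : (S ^ n) x ∈ L) : (S ^ n) (S x) ∈ L := by
  have hcomm : (S ^ n) (S x) = S ((S ^ n) x) := congr($(pow_mul_comm' S n) x)
  exact hcomm ▸ hSL _ hx

theorem stmt1_general {𝕜 : Type*} [RCLike 𝕜] {H : Type*} [NormedAddCommGroup H]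
    [InnerProductSpace 𝕜 H]
    (L : Submodule 𝕜 H)
    (S : H →L[𝕜] H) (hS : ∀ x : H, ‖S x‖ ≤ ‖x‖)
    (hSL : ∀ x ∈ L, S x ∈ L)
    (f : H) (hf : S f = f)
    (fn : ℕ → H)
    (hmem : ∀ n : ℕ, (S ^ n) (fn n) ∈ L)
    (hmin : ∀ n : ℕ, ∀ y : H, (S ^ n) y ∈ L → ‖f - fn n‖ ≤ ‖f - y‖) :
    ∀ n : ℕ, S (fn n) = fn n := by
  intro n
  let K : Submodule 𝕜 H := L.comap (S ^ n : H →L[𝕜] H).toLinearMap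
  have hcloser : ‖f - S (fn n)‖ ≤ ‖f - fn n‖ := by
    calc ‖f - S (fn n)‖ = ‖S (f - fn n)‖ := by rw [map_sub, hf]
      _ ≤ ‖f - fn n‖ := hS _
  exact Submodule.eq_of_norm_sub_le_of_forall_norm_sub_le (K := K) (hmem n)
    (S.pow_apply_mem_of_mapsTo hSL (hmem n)) (hmin n) hcloser

/-- If `S` is a linear contraction of a Hilbert space `H` mapping a closed subspace `L`
into itself, `f` is a fixed point of `S`, and `fₙ` is the orthogonal projection of `f`
onto the closed subspace `S⁻ⁿ(L)` (characterized as the nearest point of `S⁻ⁿ(L)` to `f`),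
then `S fₙ = fₙ` for every `n`. -/
theorem stmt1 {𝕜 : Type*} [RCLike 𝕜] {H : Type*} [NormedAddCommGroup H]
    [InnerProductSpace 𝕜 H] [CompleteSpace H]
    (L : Submodule 𝕜 H) (hLclosed : IsClosed (L : Set H))
    (S : H →L[𝕜] H) (hS : ∀ x : H, ‖S x‖ ≤ ‖x‖)
    (hSL : ∀ x ∈ L, S x ∈ L)
    (f : H) (hf : S f = f)
    (fn : ℕ → H)
    (hclosed : ∀ n : ℕ, IsClosed ((⇑(S ^ n)) ⁻¹' (L : Set H)))
    (hmem : ∀ n : ℕ, (S ^ n) (fn n) ∈ L)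
    (hmin : ∀ n : ℕ, ∀ y : H, (S ^ n) y ∈ L → ‖f - fn n‖ ≤ ‖f - y‖) :
    ∀ n : ℕ, S (fn n) = fn n :=
  stmt1_general L S hS hSL f hf fn hmem hmin
end

section
/- Let G be a locally compact group in which every closed subgroup is unimodular. Then for every g ∈ G such that the contraction subgroup C_g is closed, C_g is trivial: C_g = {e}. -/
/-!
Suppose `C = C_g` is closed and nontrivial. Being closed, `C` is a Baire space, and a Baire
argument makes the contraction `x ↦ gⁿ x g⁻ⁿ` uniform on compact subsets of `C`. Since `C` is not
discrete, this forces conjugation by `g⁻¹` to multiply the Haar measure of `C` by a factor `c > 1`.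
If infinitely many powers `gⁿ` lay in `F * C` with `F` compact, unimodularity of `C` would bound
the measures `cⁿ μ(K)` of the conjugates `g⁻ⁿ K gⁿ`. Hence only finitely many powers `gᵏ`, `k ∈ ℤ`,
lie in `W * C` for a compact neighbourhood `W` of `1`, which makes `C` open in the closure `H` of
`⟨g⟩ C`. Then conjugation by `g ∈ H` preserves the Haar measure of the unimodular group `H`, yet
shrinks the set `W ∩ C` of positive measure: a contradiction.
-/

open Filter Topology MeasureTheory

def contrSet {G : Type*} [Group G] [TopologicalSpace G] (g : G) : Set G :=
  {x : G | Tendsto (fun n : ℕ => g ^ n * x * (g ^ n)⁻¹) atTop (nhds 1)}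

open Set Pointwise
open scoped NNReal ENNReal

section Baire

variable {S H : Type*} [Group S] [TopologicalSpace S] [IsTopologicalGroup S] [BaireSpace S]
  [Group H] [TopologicalSpace H] [IsTopologicalGroup H]

theorem exists_mem_nhds_one_eventually_mapsTo (φ : ℕ → S →* H) (hφ : ∀ n, Continuous (φ n))
    (hlim : ∀ z, Tendsto (fun n => φ n z) atTop (𝓝 1)) {U : Set H} (hU : U ∈ 𝓝 1) :
    ∃ P ∈ 𝓝 (1 : S), ∀ᶠ n in atTop, MapsTo (φ n) P U := by
  obtain ⟨B, hB1, hBc, hBinv, hBU⟩ := exists_closed_nhds_one_inv_eq_mul_subset hU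
  set F : ℕ → Set S := fun N => ⋂ n ≥ N, φ n ⁻¹' B
  have hFc (N : ℕ) : IsClosed (F N) :=
    isClosed_biInter fun n _ => hBc.preimage (hφ n)
  have hFcover : ⋃ N, F N = univ :=
    eq_univ_of_forall fun z => by simpa [F] using eventually_atTop.1 (hlim z hB1)
  obtain ⟨N, z₀, hz₀⟩ := nonempty_interior_of_iUnion_of_closed hFc hFcover
  refine ⟨(z₀ * ·) ⁻¹' F N, (continuous_const_mul z₀).continuousAt.preimage_mem_nhds
    (by simpa using mem_interior_iff_mem_nhds.1 hz₀), eventually_atTop.2 ⟨N, fun n hn z hz => ?_⟩⟩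
  have hz₀B : φ n z₀ ∈ B := mem_iInter₂.1 (interior_subset hz₀) n hn
  have hzB : φ n (z₀ * z) ∈ B := mem_iInter₂.1 hz n hn
  have : φ n z = (φ n z₀)⁻¹ * φ n (z₀ * z) := by simp
  rw [this]
  exact hBU (mul_mem_mul (by rwa [← hBinv, Set.inv_mem_inv]) hzB)

end Baire

lemma Subgroup.mem_mul_of_mem_normalizer {G : Type*} [Group G] {N : Subgroup G} {A : Set G}
    {x : G} (hx : x ∈ Subgroup.normalizer (N : Set G)) (h : x ∈ (N : Set G) * A) :
    x ∈ A * (N : Set G) := by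
  obtain ⟨s, hs, a, ha, rfl⟩ := h
  exact ⟨a, ha, (s * a)⁻¹ * s * (s * a), (Subgroup.mem_normalizer_iff''.1 hx s).1 hs, by group⟩

lemma Subgroup.zpow_notMem_of_finite_setOf_zpow_mem_mul {G : Type*} [Group G] {N : Subgroup G}
    {W : Set G} {g : G} (hW : (1 : G) ∈ W) (hT : {k : ℤ | g ^ k ∈ W * (N : Set G)}.Finite)
    {k : ℤ} (hk : k ≠ 0) : g ^ k ∉ N :=
  fun hkN => hT.not_infinite <| Set.infinite_of_injective_forall_mem (mul_right_injective₀ hk)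
    fun m : ℤ => ⟨1, hW, g ^ (k * m), by rw [zpow_mul]; exact N.zpow_mem hkN m, one_mul _⟩

lemma nhdsNE_one_neBot_of_subset {G : Type*} [Group G] [TopologicalSpace G] {Γ : Subgroup G}
    {s : Set G} (hs : s ⊆ Γ) (h : (1 : G) ∈ closure (s \ {1})) : (𝓝[≠] (1 : Γ)).NeBot := by
  rw [← mem_closure_iff_nhdsWithin_neBot, closure_subtype]
  have hsub : s \ {1} ⊆ Subtype.val '' ({1}ᶜ : Set Γ) := fun x hx =>
    ⟨⟨x, hs hx.1⟩, by simpa [Subtype.ext_iff] using hx.2, rfl⟩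
  exact closure_mono hsub h

section ConjOfMemNormalizer

variable {G : Type*} [Group G] [TopologicalSpace G] [IsTopologicalGroup G]

def Subgroup.conjOfMemNormalizer (N : Subgroup G) {x : G}
    (hx : x ∈ Subgroup.normalizer (N : Set G)) : N ≃ₜ* N where
  toFun z := ⟨x * z * x⁻¹, (Subgroup.mem_normalizer_iff.1 hx z).1 z.2⟩
  invFun z := ⟨x⁻¹ * z * x, (Subgroup.mem_normalizer_iff''.1 hx z).1 z.2⟩
  left_inv z := by ext; simp [mul_assoc]
  right_inv z := by ext; simp [mul_assoc]
  map_mul' a b := by ext; simp [mul_assoc]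
  continuous_toFun :=
    ((IsTopologicalGroup.continuous_conj x).comp continuous_subtype_val).subtype_mk _
  continuous_invFun := by fun_prop

end ConjOfMemNormalizer

section Contraction

variable {G : Type*} [Group G] [TopologicalSpace G] {g x : G}

lemma mem_contrSet_iff :
    x ∈ contrSet g ↔ Tendsto (fun n : ℕ => MulAut.conj (g ^ n) x) atTop (𝓝 1) :=
  Iff.rfl

lemma mem_normalizer_contrSet (g : G) : g ∈ Subgroup.normalizer (contrSet g) := by
  refine Subgroup.mem_set_normalizer_iff.2 fun x => ?_
  simp only [mem_contrSet_iff, ← MulAut.conj_apply, ← MulAut.mul_apply, ← map_mul, ← pow_succ]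
  exact (tendsto_add_atTop_iff_nat 1).symm

lemma conj_pow_mem_contrSet (n : ℕ) (hx : x ∈ contrSet g) : MulAut.conj (g ^ n) x ∈ contrSet g :=
  (Subgroup.mem_set_normalizer_iff.1 (pow_mem (mem_normalizer_contrSet g) n) x).1 hx

variable [IsTopologicalGroup G]

def contrSubgroup (g : G) : Subgroup G where
  carrier := contrSet g
  one_mem' := by simpa [mem_contrSet_iff] using tendsto_const_nhds
  mul_mem' {x y} hx hy := by
    simpa only [mem_contrSet_iff, map_mul, mul_one] using
      (mem_contrSet_iff.1 hx).mul (mem_contrSet_iff.1 hy)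
  inv_mem' {x} hx := by
    simpa only [mem_contrSet_iff, map_inv, inv_one] using (mem_contrSet_iff.1 hx).inv

@[simp] lemma coe_contrSubgroup (g : G) : (contrSubgroup g : Set G) = contrSet g := rfl

lemma preimage_val_inter_contrSet_mem_nhds {W : Set G} (hW : W ∈ 𝓝 1) :
    Subtype.val ⁻¹' (W ∩ contrSet g) ∈ 𝓝 (1 : contrSubgroup g) :=
  mem_of_superset (continuous_subtype_val.continuousAt.preimage_mem_nhds hW) fun z hz => ⟨hz, z.2⟩

lemma one_mem_closure_contrSet_diff (h : contrSet g ≠ {1}) :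
    (1 : G) ∈ closure (contrSet g \ {1}) := by
  obtain ⟨x, hx, hx1⟩ : ∃ x ∈ contrSet g, x ≠ 1 := by
    by_contra! h'
    exact h (eq_singleton_iff_unique_mem.2 ⟨(contrSubgroup g).one_mem, h'⟩)
  exact mem_closure_of_tendsto hx <| Eventually.of_forall fun n =>
    ⟨conj_pow_mem_contrSet n hx, by simpa using hx1⟩

lemma finite_setOf_zpow_mem_mul_contrSet
    (h : ∀ F : Set G, IsCompact F → {n : ℕ | g ^ n ∈ F * contrSet g}.Finite) {F : Set G}
    (hF : IsCompact F) : {k : ℤ | g ^ k ∈ F * contrSet g}.Finite := by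
  refine (((h F hF).image Nat.cast).union ((h F⁻¹ hF.inv).image fun n : ℕ => -(n : ℤ))).subset ?_
  intro k hk
  obtain ⟨n, rfl | rfl⟩ := Int.eq_nat_or_neg k
  · exact Or.inl ⟨n, by simpa using hk, rfl⟩
  · refine Or.inr ⟨n, Subgroup.mem_mul_of_mem_normalizer (N := contrSubgroup g)
      (pow_mem (mem_normalizer_contrSet g) n) ?_, rfl⟩
    have hk' := Set.inv_mem_inv.2 (show (g ^ n)⁻¹ ∈ F * contrSet g by simpa using hk)
    rwa [inv_inv, mul_inv_rev, ← coe_contrSubgroup, inv_coe_set] at hk'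

end Contraction

section UniformContraction

variable {G : Type*} [Group G] [TopologicalSpace G] [IsTopologicalGroup G] [LocallyCompactSpace G]
  {g : G}

lemma exists_nhds_one_eventually_mapsTo_conj_pow (hC : IsClosed (contrSet g)) {U : Set G}
    (hU : U ∈ 𝓝 1) :
    ∃ P ∈ 𝓝 (1 : G), ∀ᶠ n in atTop, MapsTo (MulAut.conj (g ^ n)) (P ∩ contrSet g) U := by
  have : LocallyCompactSpace (contrSubgroup g) := hC.locallyCompactSpace
  obtain ⟨P, hP, hPU⟩ := exists_mem_nhds_one_eventually_mapsTo
    (fun n => (MulAut.conj (g ^ n)).toMonoidHom.comp (contrSubgroup g).subtype)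
    (fun n => (IsTopologicalGroup.continuous_conj _).comp continuous_subtype_val) (fun z => z.2) hU
  obtain ⟨Q, hQ, hQP⟩ := (mem_nhds_subtype _ _ _).1 hP
  exact ⟨Q, hQ, hPU.mono fun n hn x hx => hn (x := ⟨x, hx.2⟩) (hQP hx.1)⟩

lemma exists_conj_pow_image_subset (hC : IsClosed (contrSet g)) {K U : Set G} (hK : IsCompact K)
    (hKC : K ⊆ contrSet g) (hU : U ∈ 𝓝 1) : ∃ N : ℕ, MulAut.conj (g ^ N) '' K ⊆ U := by
  obtain ⟨P, hP, hPU⟩ := exists_nhds_one_eventually_mapsTo_conj_pow hC hU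
  obtain ⟨N, hN⟩ := eventually_atTop.1 hPU
  obtain ⟨t, ht⟩ := hK.elim_finite_subcover (fun m : ℕ => MulAut.conj (g ^ m) ⁻¹' interior P)
    (fun m => isOpen_interior.preimage (IsTopologicalGroup.continuous_conj _))
    (fun x hx => mem_iUnion.2 ((mem_contrSet_iff.1 (hKC hx)).eventually_mem
      (interior_mem_nhds.2 hP)).exists)
  -- every point of `K` enters `P` by time `t.sup id`, and stays near `1` for `N` more steps
  refine ⟨N + t.sup id, image_subset_iff.2 fun x hx => ?_⟩
  obtain ⟨m, hmt, hxm⟩ := mem_iUnion₂.1 (ht hx)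
  have hm : m ≤ t.sup id := Finset.le_sup (f := id) hmt
  have hsplit : g ^ (N + t.sup id) = g ^ (N + t.sup id - m) * g ^ m := by
    rw [← pow_add]; congr 1; omega
  simp only [mem_preimage, hsplit, map_mul, MulAut.mul_apply]
  exact hN _ (by omega) ⟨interior_subset hxm, conj_pow_mem_contrSet m (hKC hx)⟩

end UniformContraction

section SubgroupMeasure

variable {G : Type*} [Group G] [TopologicalSpace G] [IsTopologicalGroup G] [MeasurableSpace G]
  [BorelSpace G] {Γ : Subgroup G} (μ : Measure Γ)

lemma measure_preimage_val_conj_image [μ.IsMulLeftInvariant] [μ.IsMulRightInvariant] {s : G}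
    (hs : s ∈ Γ) (A : Set G) :
    μ (Subtype.val ⁻¹' (MulAut.conj s '' A)) = μ (Subtype.val ⁻¹' A) := by
  have : Subtype.val ⁻¹' (MulAut.conj s '' A) =
      (fun z : Γ => z * ⟨s, hs⟩) ⁻¹' ((fun z : Γ => ⟨s, hs⟩⁻¹ * z) ⁻¹' (Subtype.val ⁻¹' A)) := by
    ext z
    rw [mem_preimage, ← MulEquiv.coe_toEquiv, Equiv.image_eq_preimage_symm]
    simp [mul_assoc]
  rw [this, measure_preimage_mul_right, measure_preimage_mul]

lemma measure_preimage_val_conj_image_le [μ.IsMulLeftInvariant] [μ.IsMulRightInvariant] {x : G}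
    {F : Set G} (hx : x ∈ (Γ : Set G) * F) (A : Set G) :
    μ (Subtype.val ⁻¹' (MulAut.conj x '' A)) ≤ μ (Subtype.val ⁻¹' (F * A * F⁻¹)) := by
  obtain ⟨s, hs, f, hf, rfl⟩ := hx
  rw [map_mul, MulAut.coe_mul, image_comp, measure_preimage_val_conj_image μ hs]
  refine measure_mono (preimage_mono (image_subset_iff.2 fun a ha => ?_))
  exact mul_mem_mul (mul_mem_mul hf ha) (Set.inv_mem_inv.2 hf)

lemma measure_preimage_val_conj_pow_image {N : Subgroup G} [LocallyCompactSpace N]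
    (μ : Measure N) [μ.IsHaarMeasure] [μ.Regular] {x : G}
    (hx : x ∈ Subgroup.normalizer (N : Set G)) (n : ℕ) (A : Set G) :
    μ (Subtype.val ⁻¹' (MulAut.conj (x ^ n) '' A)) =
      mulEquivHaarChar (N.conjOfMemNormalizer hx) ^ n * μ (Subtype.val ⁻¹' A) := by
  induction n generalizing A with
  | zero => simp
  | succ n ih =>
    have hpre (B : Set G) : N.conjOfMemNormalizer hx ⁻¹' (Subtype.val ⁻¹' (MulAut.conj x '' B)) =
        Subtype.val ⁻¹' B := by
      ext z
      exact (MulAut.conj x).injective.mem_set_image (a := (z : G))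
    rw [pow_succ', map_mul, MulAut.coe_mul, image_comp,
      ← mulEquivHaarChar_smul_preimage μ (N.conjOfMemNormalizer hx), hpre, ih, ENNReal.smul_def,
      smul_eq_mul, pow_succ', mul_assoc]

end SubgroupMeasure

section HaarScaling

variable {G : Type*} [Group G] [TopologicalSpace G] [IsTopologicalGroup G] [LocallyCompactSpace G]
  [MeasurableSpace G] {g : G}

lemma exists_measure_conj_pow_image_lt (hC : IsClosed (contrSet g)) {Γ : Subgroup G}
    (μ : Measure Γ) [μ.OuterRegular] (hμ : μ {1} = 0) {K : Set G} (hK : IsCompact K)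
    (hKC : K ⊆ contrSet g) (hpos : 0 < μ (Subtype.val ⁻¹' K)) :
    ∃ N : ℕ, μ (Subtype.val ⁻¹' (MulAut.conj (g ^ N) '' K)) < μ (Subtype.val ⁻¹' K) := by
  obtain ⟨O, hO1, hO, hOμ⟩ := Set.exists_isOpen_lt_of_lt {1} _ (hμ ▸ hpos)
  obtain ⟨U, hU, hUO⟩ := (mem_nhds_subtype _ _ _).1 (hO.mem_nhds (hO1 rfl))
  obtain ⟨N, hN⟩ := exists_conj_pow_image_subset hC hK hKC hU
  exact ⟨N, (measure_mono ((preimage_mono hN).trans hUO)).trans_lt hOμ⟩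

variable [T2Space G] [BorelSpace G]

lemma one_lt_mulEquivHaarChar_conjOfMemNormalizer_inv (hC : IsClosed (contrSet g))
    (hne : contrSet g ≠ {1}) [LocallyCompactSpace (contrSubgroup g)] :
    1 < mulEquivHaarChar
      ((contrSubgroup g).conjOfMemNormalizer (inv_mem (mem_normalizer_contrSet g))) := by
  have : (𝓝[≠] (1 : contrSubgroup g)).NeBot :=
    nhdsNE_one_neBot_of_subset subset_rfl (one_mem_closure_contrSet_diff hne)
  let μ : Measure (contrSubgroup g) := Measure.haar
  obtain ⟨W, hW, hW1⟩ := exists_compact_mem_nhds (1 : G)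
  set K := W ∩ contrSet g
  obtain ⟨N, hN⟩ := exists_measure_conj_pow_image_lt hC μ (measure_singleton 1)
    (hW.inter_right hC) inter_subset_right
    (Measure.measure_pos_of_mem_nhds μ (preimage_val_inter_contrSet_mem_nhds hW1))
  have hscale := measure_preimage_val_conj_pow_image μ (inv_mem (mem_normalizer_contrSet g)) N
    (MulAut.conj (g ^ N) '' K)
  have hKK : MulAut.conj (g⁻¹ ^ N) '' (MulAut.conj (g ^ N) '' K) = K := by
    ext x; simp [image_image, inv_pow]
  rw [hKK] at hscale
  by_contra! hc
  have hpow : (mulEquivHaarChar _ : ℝ≥0∞) ^ N ≤ 1 := pow_le_one₀ zero_le (by exact_mod_cast hc)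
  exact hN.not_ge (hscale ▸ mul_le_of_le_one_left zero_le hpow)

lemma finite_setOf_pow_mem_mul_contrSet (hC : IsClosed (contrSet g)) (hne : contrSet g ≠ {1})
    (μ : Measure (contrSubgroup g)) [μ.IsHaarMeasure] [μ.Regular] [μ.IsMulRightInvariant]
    {F : Set G} (hF : IsCompact F) : {n : ℕ | g ^ n ∈ F * contrSet g}.Finite := by
  have : LocallyCompactSpace (contrSubgroup g) := hC.locallyCompactSpace
  have hc := one_lt_mulEquivHaarChar_conjOfMemNormalizer_inv hC hne
  set c := mulEquivHaarChar
    ((contrSubgroup g).conjOfMemNormalizer (inv_mem (mem_normalizer_contrSet g)))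
  obtain ⟨W, hW, hW1⟩ := exists_compact_mem_nhds (1 : G)
  set K := W ∩ contrSet g
  have hR : μ (Subtype.val ⁻¹' (F⁻¹ * K * F)) < ∞ :=
    (IsClosed.isClosedEmbedding_subtypeVal (s := (contrSubgroup g : Set G)) hC
      |>.isCompact_preimage ((hF.inv.mul (hW.inter_right hC)).mul hF)).measure_lt_top
  have hgrowth : Tendsto (fun n : ℕ => (c : ℝ≥0∞) ^ n * μ (Subtype.val ⁻¹' K)) atTop (𝓝 ∞) := by
    have hK := Measure.measure_pos_of_mem_nhds μ (preimage_val_inter_contrSet_mem_nhds hW1)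
    have := ENNReal.Tendsto.mul_const (b := μ (Subtype.val ⁻¹' K))
      (ENNReal.tendsto_pow_atTop_nhds_top_iff.2 (by exact_mod_cast hc : (1 : ℝ≥0∞) < c))
      (Or.inl ENNReal.top_ne_zero)
    rwa [ENNReal.top_mul hK.ne'] at this
  obtain ⟨N, hN⟩ := eventually_atTop.1 (hgrowth.eventually (lt_mem_nhds hR))
  refine (Set.finite_lt_nat N).subset fun n hn => show n < N from lt_of_not_ge fun hNn => ?_
  -- `g ^ n = f * s` turns conjugation by `g⁻ⁿ` into conjugation by `f⁻¹` up to an element of `C_g`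
  have hinv : (g ^ n)⁻¹ ∈ (contrSubgroup g : Set G) * F⁻¹ := by
    have hn' := Set.inv_mem_inv.2 (show g ^ n ∈ F * contrSet g from hn)
    rwa [mul_inv_rev, ← coe_contrSubgroup, inv_coe_set] at hn'
  have hle := measure_preimage_val_conj_image_le μ hinv K
  rw [← inv_pow, measure_preimage_val_conj_pow_image μ (inv_mem (mem_normalizer_contrSet g)),
    inv_inv] at hle
  exact (hN n hNn).not_ge hle

end HaarScaling

section OpenInClosure

variable {G : Type*} [Group G] [TopologicalSpace G] [IsTopologicalGroup G] {g : G}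

lemma isOpen_contrSubgroup_subgroupOf (hC : IsClosed (contrSet g)) {W : Set G} (hW : W ∈ 𝓝 1)
    (hT : {k : ℤ | g ^ k ∈ W * contrSet g}.Finite) :
    IsOpen ((contrSubgroup g).subgroupOf (Subgroup.zpowers g ⊔ contrSubgroup g).topologicalClosure :
      Set (Subgroup.zpowers g ⊔ contrSubgroup g).topologicalClosure) := by
  set D := Subgroup.zpowers g ⊔ contrSubgroup g
  have hD : (D : Set G) = (Subgroup.zpowers g : Set G) * contrSet g :=
    Subgroup.coe_mul_of_left_le_normalizer_right _ _
      (Subgroup.zpowers_le.2 (mem_normalizer_contrSet g))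
  -- `V` misses every coset `gᵏ C_g` with `k ≠ 0`: by construction if `gᵏ ∈ W * C_g`, and since
  -- `V ⊆ W` otherwise
  set V := interior W ∩ ⋂ k ∈ {k : ℤ | g ^ k ∈ W * contrSet g} \ {0}, (g ^ k • contrSet g)ᶜ
  have hVo : IsOpen V := isOpen_interior.inter <|
    hT.sdiff.isOpen_biInter fun k _ => (hC.smul _).isOpen_compl
  have hV1 : (1 : G) ∈ V := by
    refine ⟨mem_interior_iff_mem_nhds.2 hW, mem_iInter₂.2 fun k hk h1 => ?_⟩
    rw [mem_smul_set_iff_inv_smul_mem, smul_eq_mul, mul_one, ← zpow_neg] at h1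
    exact Subgroup.zpow_notMem_of_finite_setOf_zpow_mem_mul (N := contrSubgroup g)
      (mem_of_mem_nhds hW) hT (neg_ne_zero.2 hk.2) h1
  have hVD : V ∩ D ⊆ contrSet g := by
    rintro _ ⟨hxV, hxD⟩
    rw [hD, Subgroup.coe_zpowers] at hxD
    obtain ⟨_, ⟨k, rfl⟩, s, hs, rfl⟩ := hxD
    by_cases hk : k = 0
    · simpa [hk] using hs
    · refine absurd (smul_mem_smul_set hs) (mem_iInter₂.1 hxV.2 k ⟨?_, hk⟩)
      exact ⟨_, interior_subset hxV.1, s⁻¹, (contrSubgroup g).inv_mem hs, by group⟩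
  have hVH : V ∩ closure D ⊆ contrSet g :=
    (hVo.inter_closure).trans (closure_minimal hVD hC)
  refine Subgroup.isOpen_of_mem_nhds _ (g := 1) <|
    (mem_nhds_subtype _ _ _).2 ⟨V, hVo.mem_nhds hV1, fun z hz => ?_⟩
  exact hVH ⟨hz, by simpa [D, Subgroup.topologicalClosure_coe] using z.2⟩

variable [LocallyCompactSpace G] [T2Space G] [MeasurableSpace G] [BorelSpace G]

lemma not_isMulRightInvariant_of_isOpen_contrSubgroup (hC : IsClosed (contrSet g))
    (hne : contrSet g ≠ {1}) {H : Subgroup G} (hgH : g ∈ H) (hCH : contrSubgroup g ≤ H)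
    (hCo : IsOpen ((contrSubgroup g).subgroupOf H : Set H)) [LocallyCompactSpace H]
    (ν : Measure H) [ν.IsHaarMeasure] [ν.OuterRegular] : ¬ ν.IsMulRightInvariant := by
  intro hν
  have : (𝓝[≠] (1 : H)).NeBot :=
    nhdsNE_one_neBot_of_subset hCH (one_mem_closure_contrSet_diff hne)
  obtain ⟨W, hW, hW1⟩ := exists_compact_mem_nhds (1 : G)
  have hK : Subtype.val ⁻¹' (W ∩ contrSet g) ∈ 𝓝 (1 : H) :=
    inter_mem (continuous_subtype_val.continuousAt.preimage_mem_nhds hW1)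
      (hCo.mem_nhds (one_mem _))
  obtain ⟨N, hN⟩ := exists_measure_conj_pow_image_lt hC ν (measure_singleton 1)
    (hW.inter_right hC) inter_subset_right (Measure.measure_pos_of_mem_nhds ν hK)
  exact hN.ne (measure_preimage_val_conj_image ν (pow_mem hgH N) _)

end OpenInClosure

/-- In a locally compact group in which every closed subgroup is unimodular, every closed
contraction subgroup `C_g` is trivial. -/
theorem stmt3 {G : Type*} [Group G] [TopologicalSpace G] [IsTopologicalGroup G]
    [LocallyCompactSpace G] [T2Space G] [MeasurableSpace G] [BorelSpace G]
    (hunim : ∀ H : Subgroup G, IsClosed (H : Set G) →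
      ∀ ν : Measure ↥H, ν.IsHaarMeasure → ν.IsMulRightInvariant) :
    ∀ g : G, IsClosed (contrSet g) → contrSet g = {1} := by
  intro g hC
  by_contra hne
  set H := (Subgroup.zpowers g ⊔ contrSubgroup g).topologicalClosure
  have hHc : IsClosed (H : Set G) := Subgroup.isClosed_topologicalClosure _
  have : LocallyCompactSpace (contrSubgroup g) := hC.locallyCompactSpace
  have : LocallyCompactSpace H := hHc.locallyCompactSpace
  have := hunim (contrSubgroup g) hC Measure.haar inferInstance
  obtain ⟨W, hW, hW1⟩ := exists_compact_mem_nhds (1 : G)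
  have hCo := isOpen_contrSubgroup_subgroupOf hC hW1 <| finite_setOf_zpow_mem_mul_contrSet
    (fun F hF => finite_setOf_pow_mem_mul_contrSet hC hne Measure.haar hF) hW
  exact not_isMulRightInvariant_of_isOpen_contrSubgroup hC hne
    (Subgroup.le_topologicalClosure _ (Subgroup.mem_sup_left (Subgroup.mem_zpowers g)))
    (le_sup_right.trans (Subgroup.le_topologicalClosure _)) hCo Measure.haar
    (hunim H hHc Measure.haar inferInstance)
end

section
/- Let E be a locally compact second countable space and P a Markov operator on E such that for every u ∈ C_c⁺(E) with u not identically zero, Σ_{k≥0} Pᵏu(x) = +∞ for all x ∈ E. If f is a positive continuous function on E with Pf ≤ f (pointwise), then f is constant. -/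
open Filter Topology MeasureTheory ENNReal

noncomputable def mop {E : Type*} [MeasurableSpace E] (κ : E → Measure E)
    (f : E → ℝ≥0∞) (x : E) : ℝ≥0∞ :=
  ∫⁻ y, f y ∂(κ x)

/-!
Suppose `f x < c < f y`. The truncation `g = min f c` is a bounded continuous superharmonic
function, so its excess `g - Pg` is continuous (Feller property) and has potential
`∑ₖ Pᵏ(g - Pg) ≤ g < ∞`; recurrence forces `g - Pg = 0`. Then `c - g` is a nonnegative continuous
harmonic function vanishing at `y`, so its potential at `y` is `0`, and recurrence forces `c = g`
everywhere, contradicting `g x = f x < c`.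
-/

theorem exists_hasCompactSupport_le {X : Type*} [TopologicalSpace X] [RegularSpace X]
    [LocallyCompactSpace X] {h : X → ℝ} (hc : Continuous h) (hn : 0 ≤ h) {x₀ : X}
    (hx₀ : h x₀ ≠ 0) :
    ∃ u : X → ℝ, Continuous u ∧ HasCompactSupport u ∧ 0 ≤ u ∧ u ≠ 0 ∧ u ≤ h := by
  obtain ⟨φ, hφ1, -, hφc, hφI⟩ := exists_continuous_one_zero_of_isCompact
    (isCompact_singleton (x := x₀)) isClosed_empty (Set.disjoint_empty _)
  refine ⟨φ * h, φ.continuous.mul hc, hφc.mul_right, fun z => mul_nonneg (hφI z).1 (hn z),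
    fun h0 => hx₀ ?_, fun z => mul_le_of_le_one_left (hn z) (hφI z).2⟩
  simpa [hφ1 rfl] using congrFun h0 x₀

namespace mop

variable {E : Type*} [MeasurableSpace E] (κ : E → Measure E)

noncomputable def potential (φ : E → ℝ≥0∞) (x : E) : ℝ≥0∞ :=
  ∑' k, (mop κ)^[k] φ x

def TopologicallyRecurrent [TopologicalSpace E] : Prop :=
  ∀ u : E → ℝ, Continuous u → HasCompactSupport u → (∀ x, 0 ≤ u x) → u ≠ 0 →
    ∀ x, potential κ (fun y => ENNReal.ofReal (u y)) x = ⊤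

variable {κ}

theorem monotone : Monotone (mop κ) :=
  fun _ _ h _ => lintegral_mono h

theorem potential_mono {φ ψ : E → ℝ≥0∞} (h : φ ≤ ψ) : potential κ φ ≤ potential κ ψ :=
  fun x => ENNReal.tsum_le_tsum fun k => (monotone.iterate k) h x

theorem add_le_mop_add (φ ψ : E → ℝ≥0∞) : mop κ φ + mop κ ψ ≤ mop κ (φ + ψ) :=
  fun _ => le_lintegral_add φ ψ

theorem const [∀ x, IsProbabilityMeasure (κ x)] (a : ℝ≥0∞) :
    mop κ (fun _ => a) = fun _ => a := by
  ext x
  simp [mop]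

theorem const_sub [∀ x, IsProbabilityMeasure (κ x)] {a : ℝ≥0∞} (ha : a ≠ ⊤) {φ : E → ℝ≥0∞}
    (hφ : Measurable φ) (hle : ∀ x, φ x ≤ a) (x : E) :
    mop κ (fun y => a - φ y) x = a - mop κ φ x := by
  have hfin : mop κ φ x ≠ ⊤ :=
    ne_top_of_le_ne_top ha ((monotone hle x).trans_eq (congrFun (const a) x))
  rw [mop, lintegral_sub hφ hfin (Eventually.of_forall hle), ← mop, ← mop, const]

theorem min_const_le [∀ x, IsProbabilityMeasure (κ x)] {φ : E → ℝ≥0∞} (h : mop κ φ ≤ φ)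
    (a : ℝ≥0∞) : mop κ (fun x => min (φ x) a) ≤ fun x => min (φ x) a :=
  monotone.map_inf_le _ _ |>.trans (inf_le_inf h (const a).le)

theorem iterate_add_le {φ ψ : E → ℝ≥0∞} (h : ψ + mop κ φ ≤ φ) (n : ℕ) :
    (mop κ)^[n] ψ + (mop κ)^[n + 1] φ ≤ (mop κ)^[n] φ := by
  induction n with
  | zero => simpa using h
  | succ n ih =>
    simp only [Function.iterate_succ_apply'] at ih ⊢
    exact (add_le_mop_add _ _).trans (monotone ih)

theorem potential_le {φ ψ : E → ℝ≥0∞} (h : ψ + mop κ φ ≤ φ) : potential κ ψ ≤ φ := by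
  have partial_sum : ∀ n, ∑ k ∈ Finset.range n, (mop κ)^[k] ψ + (mop κ)^[n] φ ≤ φ := by
    intro n
    induction n with
    | zero => simp
    | succ n ih =>
      rw [Finset.sum_range_succ, add_assoc]
      exact (add_le_add le_rfl (iterate_add_le h n)).trans ih
  intro x
  rw [potential, ENNReal.tsum_eq_iSup_nat]
  exact iSup_le fun n => le_self_add.trans (by simpa using partial_sum n x)

theorem potential_eq_zero_of_harmonic {φ : E → ℝ≥0∞} (h : mop κ φ = φ) {x : E} (hx : φ x = 0) :
    potential κ φ x = 0 := by
  simp [potential, Function.iterate_fixed h, hx]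

theorem ofReal_eq_ofReal_integral [TopologicalSpace E] [OpensMeasurableSpace E]
    [∀ x, IsProbabilityMeasure (κ x)] (g : BoundedContinuousFunction E ℝ) (hg : ∀ x, 0 ≤ g x)
    (x : E) :
    mop κ (fun y => ENNReal.ofReal (g y)) x = ENNReal.ofReal (∫ y, g y ∂κ x) :=
  (ofReal_integral_eq_lintegral_ofReal (g.integrable (κ x)) (Eventually.of_forall hg)).symm

namespace TopologicallyRecurrent

variable [TopologicalSpace E] [RegularSpace E] [LocallyCompactSpace E]

theorem eq_zero_of_potential_ne_top (hrec : TopologicallyRecurrent κ) {h : E → ℝ}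
    (hc : Continuous h) (hn : 0 ≤ h) {x : E}
    (hx : potential κ (fun y => ENNReal.ofReal (h y)) x ≠ ⊤) : h = 0 := by
  by_contra hne
  obtain ⟨x₀, hx₀⟩ := Function.ne_iff.mp hne
  obtain ⟨u, huc, hus, hun, hu0, hule⟩ := exists_hasCompactSupport_le hc hn hx₀
  refine hx (top_le_iff.mp ?_)
  rw [← hrec u huc hus hun hu0 x]
  exact potential_mono (fun y => ENNReal.ofReal_le_ofReal (hule y)) x

theorem eq_zero_of_harmonic (hrec : TopologicallyRecurrent κ) {h : E → ℝ} (hc : Continuous h)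
    (hn : 0 ≤ h) (hfix : mop κ (fun y => ENNReal.ofReal (h y)) = fun y => ENNReal.ofReal (h y))
    {x : E} (hx : h x = 0) : h = 0 :=
  hrec.eq_zero_of_potential_ne_top hc hn (x := x) <| by
    rw [potential_eq_zero_of_harmonic hfix (by rw [hx, ENNReal.ofReal_zero])]
    exact ENNReal.zero_ne_top

variable [OpensMeasurableSpace E] [∀ x, IsProbabilityMeasure (κ x)]

theorem harmonic_of_superharmonic (hrec : TopologicallyRecurrent κ)
    (g : BoundedContinuousFunction E ℝ) (hg : ∀ x, 0 ≤ g x)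
    (hcont : Continuous fun x => ∫ y, g y ∂κ x)
    (hsuper : mop κ (fun y => ENNReal.ofReal (g y)) ≤ fun y => ENNReal.ofReal (g y)) :
    mop κ (fun y => ENNReal.ofReal (g y)) = fun y => ENNReal.ofReal (g y) := by
  have hPg : ∀ x, ∫ y, g y ∂κ x ≤ g x := fun x =>
    (ENNReal.ofReal_le_ofReal_iff (hg x)).mp
      ((ofReal_eq_ofReal_integral g hg x).symm.trans_le (hsuper x))
  have excess : (fun x => ENNReal.ofReal (g x - ∫ y, g y ∂κ x)) +
      mop κ (fun y => ENNReal.ofReal (g y)) ≤ fun y => ENNReal.ofReal (g y) := fun x => by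
    simp only [Pi.add_apply, ofReal_eq_ofReal_integral g hg x]
    rw [← ENNReal.ofReal_add (sub_nonneg.mpr (hPg x)) (integral_nonneg hg), sub_add_cancel]
  ext x
  have hzero := hrec.eq_zero_of_potential_ne_top (g.continuous.sub hcont)
    (fun x => sub_nonneg.mpr (hPg x)) (x := x)
    (ne_top_of_le_ne_top ENNReal.ofReal_ne_top (potential_le excess x))
  have hfix : g x = ∫ y, g y ∂κ x := sub_eq_zero.mp (congrFun hzero x)
  rw [ofReal_eq_ofReal_integral g hg x, ← hfix]

theorem le_of_superharmonic (hrec : TopologicallyRecurrent κ)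
    (hFeller : ∀ g : BoundedContinuousFunction E ℝ, Continuous fun x => ∫ y, g y ∂κ x)
    {f : E → ℝ} (hfc : Continuous f) (hf : ∀ x, 0 ≤ f x)
    (hsuper : mop κ (fun y => ENNReal.ofReal (f y)) ≤ fun y => ENNReal.ofReal (f y)) (x y : E) :
    f y ≤ f x := by
  by_contra! hlt
  obtain ⟨c, hxc, hcy⟩ := exists_between hlt
  have hc : 0 ≤ c := (hf x).trans hxc.le
  have hg : ∀ z, 0 ≤ min (f z) c := fun z => le_min (hf z) hc
  let g : BoundedContinuousFunction E ℝ := .ofNormedAddCommGroup (fun z => min (f z) c)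
    (hfc.min continuous_const) c fun z => by
      rw [Real.norm_eq_abs, abs_of_nonneg (hg z)]
      exact min_le_right _ _
  have hg_super : mop κ (fun z => ENNReal.ofReal (g z)) ≤ fun z => ENNReal.ofReal (g z) := by
    simpa only [g, BoundedContinuousFunction.coe_ofNormedAddCommGroup, ENNReal.ofReal_min]
      using min_const_le hsuper (ENNReal.ofReal c)
  have hg_harm := hrec.harmonic_of_superharmonic g hg (hFeller g) hg_super
  have hgap_harm :
      mop κ (fun z => ENNReal.ofReal (c - g z)) = fun z => ENNReal.ofReal (c - g z) := by
    have hsub : (fun z => ENNReal.ofReal (c - g z)) =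
        fun z => ENNReal.ofReal c - ENNReal.ofReal (g z) :=
      funext fun z => ENNReal.ofReal_sub c (hg z)
    rw [hsub]
    ext z
    rw [const_sub ENNReal.ofReal_ne_top g.continuous.measurable.ennreal_ofReal
      (fun z => ENNReal.ofReal_le_ofReal (min_le_right _ _)) z, hg_harm]
  have hgap := hrec.eq_zero_of_harmonic (h := fun z => c - g z) (continuous_const.sub g.continuous)
    (fun z => sub_nonneg.mpr (min_le_right _ _)) hgap_harm (x := y)
    (by simp [g, min_eq_right hcy.le])
  have hgap_x : c - min (f x) c = 0 := congrFun hgap x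
  rw [min_eq_left hxc.le] at hgap_x
  linarith

end TopologicallyRecurrent

end mop

theorem stmt6_general {E : Type*} [TopologicalSpace E] [LocallyCompactSpace E]
    [T2Space E] [MeasurableSpace E] [BorelSpace E]
    (κ : E → Measure E)
    (hκprob : ∀ x, IsProbabilityMeasure (κ x))
    (hFeller : ∀ g : BoundedContinuousFunction E ℝ, Continuous fun x => ∫ y, g y ∂(κ x))
    (hdiv : ∀ u : E → ℝ, Continuous u → HasCompactSupport u → (∀ x, 0 ≤ u x) → u ≠ 0 →
      ∀ x : E, ∑' k : ℕ, (mop κ)^[k] (fun y => ENNReal.ofReal (u y)) x = ⊤)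
    (f : E → ℝ) (hfc : Continuous f) (hfpos : ∀ x, 0 < f x)
    (hsuper : ∀ x, ∫⁻ y, ENNReal.ofReal (f y) ∂(κ x) ≤ ENNReal.ofReal (f x)) :
    ∀ x y : E, f x = f y := by
  have hrec : mop.TopologicallyRecurrent κ := hdiv
  have hle := hrec.le_of_superharmonic hFeller hfc (fun x => (hfpos x).le) hsuper
  exact fun x y => le_antisymm (hle y x) (hle x y)

/-- Let `E` be a locally compact second countable space and `P` a Markov operator on `E`
(given by a probability transition kernel `κ` preserving bounded continuous functions)
such that `Σₖ Pᵏu = +∞` everywhere for every nonzero `u ∈ C_c⁺(E)`. Then every positive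
continuous `P`-superharmonic function on `E` is constant. -/
theorem stmt6 {E : Type*} [TopologicalSpace E] [LocallyCompactSpace E]
    [SecondCountableTopology E] [T2Space E] [MeasurableSpace E] [BorelSpace E]
    (κ : E → Measure E) (hκmeas : Measurable κ)
    (hκprob : ∀ x, IsProbabilityMeasure (κ x))
    (hFeller : ∀ g : BoundedContinuousFunction E ℝ, Continuous fun x => ∫ y, g y ∂(κ x))
    (hdiv : ∀ u : E → ℝ, Continuous u → HasCompactSupport u → (∀ x, 0 ≤ u x) → u ≠ 0 →
      ∀ x : E, ∑' k : ℕ, (mop κ)^[k] (fun y => ENNReal.ofReal (u y)) x = ⊤)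
    (f : E → ℝ) (hfc : Continuous f) (hfpos : ∀ x, 0 < f x)
    (hsuper : ∀ x, ∫⁻ y, ENNReal.ofReal (f y) ∂(κ x) ≤ ENNReal.ofReal (f x)) :
    ∀ x y : E, f x = f y :=
  stmt6_general κ hκprob hFeller hdiv f hfc hfpos hsuper
end

section
/- Let E be a locally compact second countable space and P a Markov operator on E such that Σ_{k≥0} Pᵏu = +∞ on E for every nonzero u ∈ C_c⁺(E). Then every nonzero P-invariant positive Radon measure ν on E satisfies ν(φ) > 0 for every nonzero φ ∈ C_c⁺(E); i.e., ν has full support relative to compactly supported test functions. -/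
open Filter Topology MeasureTheory ENNReal

/-!
If `ν(φ) = 0`, then `ν(Pᵏφ) = 0` for every `k`: invariance on compactly supported test functions
extends, by Fatou's lemma along compactly supported cut-offs `ψₙ ↑ 1`, to the inequality
`ν(P f) ≤ ν(f)` for every continuous `f ≥ 0`, and the Feller property keeps the iterates `Pᵏφ`
continuous. Hence `ν(∑ₖ Pᵏφ) = 0`, while `∑ₖ Pᵏφ = ∞` everywhere, so `ν = 0`.
-/

theorem exists_seq_hasCompactSupport_eventually_eq_one (E : Type*) [TopologicalSpace E]
    [RegularSpace E] [LocallyCompactSpace E] [SigmaCompactSpace E] :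
    ∃ ψ : ℕ → C(E, ℝ), (∀ n, HasCompactSupport (ψ n)) ∧ (∀ n x, ψ n x ∈ Set.Icc (0 : ℝ) 1) ∧
      ∀ x, ∀ᶠ n in atTop, ψ n x = 1 := by
  let K := CompactExhaustion.choice E
  choose ψ hψK _ hψcs hψ01 using fun n =>
    exists_continuous_one_zero_of_isCompact (K.isCompact n) isClosed_empty
      (Set.disjoint_empty (K n))
  refine ⟨ψ, hψcs, hψ01, fun x => ?_⟩
  obtain ⟨n, hn⟩ := K.exists_mem x
  filter_upwards [eventually_ge_atTop n] with m hm
  exact hψK m (K.subset hm hn)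

section Measurability

variable {E : Type*} [MeasurableSpace E] {κ : E → Measure E}

theorem measurable_mop (hκmeas : Measurable κ) {f : E → ℝ≥0∞} (hf : Measurable f) :
    Measurable (mop κ f) :=
  (Measure.measurable_lintegral hf).comp hκmeas

theorem measurable_iterate_mop (hκmeas : Measurable κ) {f : E → ℝ≥0∞} (hf : Measurable f)
    (k : ℕ) : Measurable ((mop κ)^[k] f) := by
  induction k with
  | zero => exact hf
  | succ k ih =>
    rw [Function.iterate_succ_apply']
    exact measurable_mop hκmeas ih

end Measurability

section MarkovOperator

open scoped BoundedContinuousFunction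

variable {E : Type*} [TopologicalSpace E] [MeasurableSpace E] [OpensMeasurableSpace E]
  {κ : E → Measure E}

theorem exists_iterate_mop_ofReal_eq (hκprob : ∀ x, IsProbabilityMeasure (κ x))
    (hFeller : ∀ g : E →ᵇ ℝ, Continuous fun x => ∫ y, g y ∂(κ x))
    (g : E →ᵇ ℝ) (hg : 0 ≤ g) (k : ℕ) :
    ∃ h : E →ᵇ ℝ, 0 ≤ h ∧
      (mop κ)^[k] (fun y => ENNReal.ofReal (g y)) = fun y => ENNReal.ofReal (h y) := by
  have := hκprob
  induction k with
  | zero => exact ⟨g, hg, rfl⟩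
  | succ k ih =>
    obtain ⟨h, hh0, hk⟩ := ih
    refine ⟨.ofNormedAddCommGroup (fun x => ∫ y, h y ∂(κ x)) (hFeller h) ‖h‖
      fun x => h.norm_integral_le_norm (μ := κ x), fun x => integral_nonneg hh0, ?_⟩
    ext x
    rw [Function.iterate_succ_apply', hk, mop,
      ← ofReal_integral_eq_lintegral_ofReal (h.integrable _) (.of_forall hh0)]
    rfl

theorem lintegral_mop_le_of_continuous [RegularSpace E] [LocallyCompactSpace E]
    [SigmaCompactSpace E] (hκmeas : Measurable κ) {ν : Measure E}
    (hsub : ∀ φ : E → ℝ, Continuous φ → HasCompactSupport φ → (∀ x, 0 ≤ φ x) →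
      ∫⁻ x, mop κ (fun y => ENNReal.ofReal (φ y)) x ∂ν ≤ ∫⁻ x, ENNReal.ofReal (φ x) ∂ν)
    {f : E → ℝ} (hf : Continuous f) (hf0 : ∀ x, 0 ≤ f x) :
    ∫⁻ x, mop κ (fun y => ENNReal.ofReal (f y)) x ∂ν ≤ ∫⁻ x, ENNReal.ofReal (f x) ∂ν := by
  obtain ⟨ψ, hψcs, hψ01, hψ1⟩ := exists_seq_hasCompactSupport_eventually_eq_one E
  set F : ℕ → E → ℝ≥0∞ := fun n y => ENNReal.ofReal (f y * ψ n y)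
  have hFmeas : ∀ n, Measurable (F n) :=
    fun n => (hf.mul (ψ n).continuous).measurable.ennreal_ofReal
  have hFlim : ∀ y, liminf (fun n => F n y) atTop = ENNReal.ofReal (f y) := fun y => by
    rw [liminf_congr (v := fun _ => ENNReal.ofReal (f y))
      ((hψ1 y).mono fun n hn => by simp only [F, hn, mul_one]), liminf_const]
  have hFle : ∀ n, ∫⁻ x, F n x ∂ν ≤ ∫⁻ x, ENNReal.ofReal (f x) ∂ν := fun n =>
    lintegral_mono fun y => ENNReal.ofReal_le_ofReal
      (mul_le_of_le_one_right (hf0 y) (hψ01 n y).2)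
  calc ∫⁻ x, mop κ (fun y => ENNReal.ofReal (f y)) x ∂ν
      = ∫⁻ x, ∫⁻ y, liminf (fun n => F n y) atTop ∂(κ x) ∂ν := by simp only [hFlim, mop]
    _ ≤ ∫⁻ x, liminf (fun n => mop κ (F n) x) atTop ∂ν :=
      lintegral_mono fun x => lintegral_liminf_le hFmeas
    _ ≤ liminf (fun n => ∫⁻ x, mop κ (F n) x ∂ν) atTop :=
      lintegral_liminf_le fun n => measurable_mop hκmeas (hFmeas n)
    _ ≤ liminf (fun _ => ∫⁻ x, ENNReal.ofReal (f x) ∂ν) atTop :=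
      liminf_le_liminf <| .of_forall fun n => (hsub _ (hf.mul (ψ n).continuous)
        (hψcs n).mul_left fun y => mul_nonneg (hf0 y) (hψ01 n y).1).trans (hFle n)
    _ = ∫⁻ x, ENNReal.ofReal (f x) ∂ν := liminf_const _

theorem lintegral_iterate_mop_eq_zero [RegularSpace E] [LocallyCompactSpace E]
    [SigmaCompactSpace E] (hκmeas : Measurable κ) (hκprob : ∀ x, IsProbabilityMeasure (κ x))
    (hFeller : ∀ g : E →ᵇ ℝ, Continuous fun x => ∫ y, g y ∂(κ x)) {ν : Measure E}
    (hsub : ∀ φ : E → ℝ, Continuous φ → HasCompactSupport φ → (∀ x, 0 ≤ φ x) →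
      ∫⁻ x, mop κ (fun y => ENNReal.ofReal (φ y)) x ∂ν ≤ ∫⁻ x, ENNReal.ofReal (φ x) ∂ν)
    (g : E →ᵇ ℝ) (hg : 0 ≤ g) (hg0 : ∫⁻ x, ENNReal.ofReal (g x) ∂ν = 0) (k : ℕ) :
    ∫⁻ x, (mop κ)^[k] (fun y => ENNReal.ofReal (g y)) x ∂ν = 0 := by
  induction k with
  | zero => exact hg0
  | succ k ih =>
    obtain ⟨h, hh0, hk⟩ := exists_iterate_mop_ofReal_eq hκprob hFeller g hg k
    rw [hk] at ih
    rw [Function.iterate_succ_apply', hk, ← nonpos_iff_eq_zero, ← ih]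
    exact lintegral_mop_le_of_continuous hκmeas hsub h.continuous hh0

end MarkovOperator

theorem stmt7_general {E : Type*} [TopologicalSpace E] [LocallyCompactSpace E]
    [SecondCountableTopology E] [T2Space E] [MeasurableSpace E] [BorelSpace E]
    (κ : E → Measure E) (hκmeas : Measurable κ)
    (hκprob : ∀ x, IsProbabilityMeasure (κ x))
    (hFeller : ∀ g : BoundedContinuousFunction E ℝ, Continuous fun x => ∫ y, g y ∂(κ x))
    (hdiv : ∀ u : E → ℝ, Continuous u → HasCompactSupport u → (∀ x, 0 ≤ u x) → u ≠ 0 →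
      ∀ x : E, ∑' k : ℕ, (mop κ)^[k] (fun y => ENNReal.ofReal (u y)) x = ⊤)
    (ν : Measure E) (hν0 : ν ≠ 0)
    (hinv : ∀ φ : E → ℝ, Continuous φ → HasCompactSupport φ → (∀ x, 0 ≤ φ x) →
      ∫⁻ x, mop κ (fun y => ENNReal.ofReal (φ y)) x ∂ν = ∫⁻ x, ENNReal.ofReal (φ x) ∂ν) :
    ∀ φ : E → ℝ, Continuous φ → HasCompactSupport φ → (∀ x, 0 ≤ φ x) → φ ≠ 0 →
      0 < ∫⁻ x, ENNReal.ofReal (φ x) ∂ν := by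
  intro φ hφc hφcs hφ0 hφne
  refine pos_iff_ne_zero.2 fun hzero => hν0 (Measure.measure_univ_eq_zero.1 ?_)
  obtain ⟨B, hB⟩ := hφcs.exists_bound_of_continuous hφc
  have hiter : ∀ k, ∫⁻ x, (mop κ)^[k] (fun y => ENNReal.ofReal (φ y)) x ∂ν = 0 :=
    lintegral_iterate_mop_eq_zero hκmeas hκprob hFeller (fun φ hc hcs h0 => (hinv φ hc hcs h0).le)
      (.ofNormedAddCommGroup φ hφc B hB) hφ0 hzero
  have hsum : ∫⁻ x, ∑' k, (mop κ)^[k] (fun y => ENNReal.ofReal (φ y)) x ∂ν = 0 := by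
    rw [lintegral_tsum fun k => (measurable_iterate_mop hκmeas
      hφc.measurable.ennreal_ofReal k).aemeasurable]
    simp only [hiter, tsum_zero]
  simpa [hdiv φ hφc hφcs hφ0 hφne] using hsum

/-- Let `E` be a locally compact second countable space and `P` a Markov operator on `E`
such that `Σₖ Pᵏu = +∞` on `E` for every nonzero `u ∈ C_c⁺(E)`. Then every nonzero
`P`-invariant positive Radon measure `ν` on `E` satisfies `ν(φ) > 0` for every nonzero
`φ ∈ C_c⁺(E)`. -/
theorem stmt7 {E : Type*} [TopologicalSpace E] [LocallyCompactSpace E]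
    [SecondCountableTopology E] [T2Space E] [MeasurableSpace E] [BorelSpace E]
    (κ : E → Measure E) (hκmeas : Measurable κ)
    (hκprob : ∀ x, IsProbabilityMeasure (κ x))
    (hFeller : ∀ g : BoundedContinuousFunction E ℝ, Continuous fun x => ∫ y, g y ∂(κ x))
    (hdiv : ∀ u : E → ℝ, Continuous u → HasCompactSupport u → (∀ x, 0 ≤ u x) → u ≠ 0 →
      ∀ x : E, ∑' k : ℕ, (mop κ)^[k] (fun y => ENNReal.ofReal (u y)) x = ⊤)
    (ν : Measure E) (hν0 : ν ≠ 0)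
    (hRadon : IsFiniteMeasureOnCompacts ν) (hreg : ν.InnerRegular)
    (hinv : ∀ φ : E → ℝ, Continuous φ → HasCompactSupport φ → (∀ x, 0 ≤ φ x) →
      ∫⁻ x, mop κ (fun y => ENNReal.ofReal (φ y)) x ∂ν = ∫⁻ x, ENNReal.ofReal (φ x) ∂ν) :
    ∀ φ : E → ℝ, Continuous φ → HasCompactSupport φ → (∀ x, 0 ≤ φ x) → φ ≠ 0 →
      0 < ∫⁻ x, ENNReal.ofReal (φ x) ∂ν :=
  stmt7_general κ hκmeas hκprob hFeller hdiv ν hν0 hinv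
end

section
/- Let G be a connected real Lie group in which every contraction subgroup C_g (g ∈ G) is trivial for the adjoint action, i.e., C_{Ad(g)} = {e} in GL(𝔤) for all g. Then for every g ∈ G, all eigenvalues of Ad(g) have absolute value 1 (G is of type R). -/
open Filter Topology Matrix

variable {L : Type*} [LieRing L] [LieAlgebra ℝ L] {d : ℕ} (b : Module.Basis (Fin d) ℝ L)

/-- The group `Int(𝔤) = Ad(G)` of inner automorphisms of the Lie algebra `𝔤 = L` of a
connected Lie group, written in a basis `b` of `𝔤`: the subgroup of `GL(𝔤)`
generated by the exponentials `exp(ad X)`, `X ∈ 𝔤`. -/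
noncomputable def adjointGroup : Subgroup (GL (Fin d) ℝ) :=
  Subgroup.closure {u : GL (Fin d) ℝ | ∃ X : L,
    (u : Matrix (Fin d) (Fin d) ℝ) =
      NormedSpace.exp (LinearMap.toMatrix b b (LieAlgebra.ad ℝ L X))}

/-!
If `Ad(g)` had eigenvalues `λ, κ` with `|λ| < |κ|`, take a right `λ`-eigenvector `v` and a left
`κ`-eigenvector `u` of `Ad(g)`: conjugation by `Ad(g)` multiplies `N = v uᵀ` by `λ / κ`, so the
real part `P` of `N` is contracted, and `1 + t P` (for small `t ≠ 0`) is a nontrivial element of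
the contraction subgroup. Hence all eigenvalues of `Ad(g)` have a common modulus `ρ`.

Being a product of exponentials of the derivations `ad X`, `Ad(g)` is an automorphism of the
bracket. If `ρ < 1`, Gelfand's formula bounds `‖Ad(g)ᵏ‖` by roughly `ρᵏ` and `‖Ad(g)⁻ᵏ‖` by
roughly `ρ⁻ᵏ`, so `[x, y] = Ad(g)⁻ᵏ [Ad(g)ᵏ x, Ad(g)ᵏ y]` tends to `0`: `𝔤` is abelian, hence
`Ad(g) = 1`, contradicting `ρ < 1`. Applying this to `g⁻¹` excludes `ρ > 1`.
-/

theorem Units.conj_pow_eq_smul {R A : Type*} [CommSemiring R] [Ring A] [Algebra R A] {a : Aˣ}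
    {x : A} {c : R} (h : (a : A) * x * ↑a⁻¹ = c • x) (k : ℕ) :
    (↑(a ^ k) : A) * x * ↑(a ^ k)⁻¹ = c ^ k • x := by
  induction k with
  | zero => simp
  | succ k ih =>
    calc (↑(a ^ (k + 1)) : A) * x * ↑(a ^ (k + 1))⁻¹
        = ↑(a ^ k) * (a * x * ↑a⁻¹) * ↑(a ^ k)⁻¹ := by
          simp only [pow_succ, _root_.mul_inv_rev, Units.val_mul, mul_assoc]
      _ = c ^ (k + 1) • x := by rw [h, mul_smul_comm, smul_mul_assoc, ih, pow_succ', mul_smul]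

namespace Matrix

theorem exists_mulVec_eq_smul_of_mem_spectrum {n K : Type*} [Fintype n] [DecidableEq n]
    [Field K] {A : Matrix n n K} {μ : K} (h : μ ∈ spectrum K A) : ∃ v ≠ 0, A *ᵥ v = μ • v := by
  rw [← spectrum_toLin', ← Module.End.hasEigenvalue_iff_mem_spectrum] at h
  obtain ⟨v, hv⟩ := h.exists_hasEigenvector
  exact ⟨v, hv.2, by simpa [Module.End.mem_eigenspace_iff] using hv.1⟩

theorem exists_vecMul_eq_smul_of_mem_spectrum {n K : Type*} [Fintype n] [DecidableEq n]
    [Field K] {A : Matrix n n K} {μ : K} (h : μ ∈ spectrum K A) : ∃ u ≠ 0, u ᵥ* A = μ • u := by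
  rw [mem_spectrum_iff_isRoot_charpoly, ← charpoly_transpose,
    ← mem_spectrum_iff_isRoot_charpoly] at h
  obtain ⟨u, hu, hAu⟩ := exists_mulVec_eq_smul_of_mem_spectrum h
  exact ⟨u, hu, by rwa [← mulVec_transpose]⟩

theorem map_re_ofReal_mul_mul_ofReal {l m n : Type*} [Fintype m] [Fintype n]
    (A : Matrix l m ℝ) (C : Matrix m n ℂ) (B : Matrix n n ℝ) :
    (A.map (algebraMap ℝ ℂ) * C * B.map (algebraMap ℝ ℂ)).map Complex.re
      = A * C.map Complex.re * B := by
  ext i j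
  simp [mul_apply, Complex.re_sum, Finset.sum_mul]

section LinftyOpNorm

open scoped Norms.Operator

theorem linfty_opNNNorm_map_algebraMap {m n : Type*} [Fintype m] [Fintype n]
    (A : Matrix m n ℝ) : ‖A.map (algebraMap ℝ ℂ)‖₊ = ‖A‖₊ := by
  simp only [linfty_opNNNorm_def, map_apply]
  congr! 3 with i j
  exact NNReal.eq (by simp)

end LinftyOpNorm

namespace GeneralLinearGroup

variable {n : Type*} [Fintype n] [DecidableEq n]

theorem isEmbedding_val {𝕜 : Type*} [NormedField 𝕜] :
    IsEmbedding (Units.val : GL n 𝕜 → Matrix n n 𝕜) :=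
  Units.isEmbedding_val_mk' (f := Inv.inv)
    (fun A hA => (continuousAt_matrix_inv A (by
      rw [Ring.inverse_eq_inv']
      exact continuousAt_inv₀ ((isUnit_iff_isUnit_det A).mp hA).ne_zero)).continuousWithinAt)
    fun u => (coe_units_inv u).symm

theorem exists_ne_one_tendsto_conj_of_tendsto_zero {𝕜 : Type*} [NontriviallyNormedField 𝕜]
    {ι : Type*} {l : Filter ι} (a : ι → GL n 𝕜) {P : Matrix n n 𝕜} (hP : P ≠ 0)
    (h : Tendsto (fun i => (a i : Matrix n n 𝕜) * P * (↑(a i)⁻¹ : Matrix n n 𝕜)) l (𝓝 0)) :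
    ∃ v : GL n 𝕜, v ≠ 1 ∧ Tendsto (fun i => a i * v * (a i)⁻¹) l (𝓝 1) := by
  obtain ⟨t, ht, ht0⟩ : ∃ t : 𝕜, IsUnit (1 + t • P) ∧ t ≠ 0 := by
    have hdet : ∀ᶠ t in 𝓝 (0 : 𝕜), (1 + t • P).det ≠ 0 := by
      refine ((continuous_const.add (continuous_id.smul continuous_const)).matrix_det.tendsto
        (0 : 𝕜)).eventually_ne ?_
      simp
    obtain ⟨t, hdet, ht0⟩ := ((hdet.filter_mono nhdsWithin_le_nhds).and
      (self_mem_nhdsWithin (s := {0}ᶜ))).exists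
    exact ⟨t, (isUnit_iff_isUnit_det _).mpr (isUnit_iff_ne_zero.mpr hdet), ht0⟩
  refine ⟨ht.unit, fun h1 => smul_ne_zero ht0 hP ?_, ?_⟩
  · simpa using congr_arg Units.val h1
  · have hconj : ∀ i, (↑(a i * ht.unit * (a i)⁻¹) : Matrix n n 𝕜)
        = 1 + t • ((a i : Matrix n n 𝕜) * P * (↑(a i)⁻¹ : Matrix n n 𝕜)) := fun i => by
      simp [mul_add, add_mul]
    rw [isEmbedding_val.tendsto_nhds_iff]
    simpa [Function.comp_def, hconj] using tendsto_const_nhds.add (h.const_smul t)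

theorem coe_map_algebraMap_pow (g : GL n ℝ) (m : ℕ) :
    (↑(map (algebraMap ℝ ℂ) g ^ m) : Matrix n n ℂ)
      = (↑(g ^ m) : Matrix n n ℝ).map (algebraMap ℝ ℂ) := by
  rw [← map_pow]; rfl

theorem coe_map_algebraMap_pow_inv (g : GL n ℝ) (m : ℕ) :
    (↑((map (algebraMap ℝ ℂ) g ^ m)⁻¹) : Matrix n n ℂ)
      = (↑((g ^ m)⁻¹) : Matrix n n ℝ).map (algebraMap ℝ ℂ) := by
  rw [← map_pow, ← map_inv]; rfl

theorem inv_mem_spectrum_map_inv_iff {g : GL n ℝ} {μ : ℂ} :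
    μ⁻¹ ∈ spectrum ℂ ((↑g⁻¹ : Matrix n n ℝ).map (algebraMap ℝ ℂ))
      ↔ μ ∈ spectrum ℂ ((g : Matrix n n ℝ).map (algebraMap ℝ ℂ)) := by
  have h := spectrum.inv₀_mem_inv_iff (R := ℂ) (r := μ) (a := map (algebraMap ℝ ℂ) g)
  rw [← map_inv] at h
  exact h

theorem exists_ne_zero_tendsto_conj_pow_of_norm_lt (g : GL n ℝ) {l k : ℂ}
    (hl : l ∈ spectrum ℂ ((g : Matrix n n ℝ).map (algebraMap ℝ ℂ)))
    (hk : k ∈ spectrum ℂ ((g : Matrix n n ℝ).map (algebraMap ℝ ℂ))) (hlt : ‖l‖ < ‖k‖) :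
    ∃ P : Matrix n n ℝ, P ≠ 0 ∧ Tendsto
      (fun m : ℕ => (↑(g ^ m) : Matrix n n ℝ) * P * (↑((g ^ m)⁻¹) : Matrix n n ℝ)) atTop (𝓝 0) := by
  set G := map (algebraMap ℝ ℂ) g
  obtain ⟨v, hv, hGv⟩ := exists_mulVec_eq_smul_of_mem_spectrum (A := (G : Matrix n n ℂ)) hl
  obtain ⟨u, hu, huG⟩ := exists_vecMul_eq_smul_of_mem_spectrum (A := (G : Matrix n n ℂ)) hk
  obtain ⟨i, hi⟩ := Function.ne_iff.mp hv
  obtain ⟨j, hj⟩ := Function.ne_iff.mp hu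
  have hk0 : k ≠ 0 := norm_pos_iff.mp ((norm_nonneg l).trans_lt hlt)
  -- scaled so that its real part has the entry `1` at `(i, j)`
  set N := (v i * u j)⁻¹ • vecMulVec v u
  have hNij : N i j = 1 := inv_mul_cancel₀ (mul_ne_zero hi hj)
  have hGN : (G : Matrix n n ℂ) * N = l • N := by
    rw [mul_smul_comm, mul_vecMulVec, hGv, smul_vecMulVec, smul_comm]
  have hNG : N * (↑G⁻¹ : Matrix n n ℂ) = k⁻¹ • N := by
    have hNG : N * G = k • N := by
      rw [smul_mul_assoc, vecMulVec_mul, huG, vecMulVec_smul, smul_comm]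
    rw [← inv_smul_smul₀ hk0 (N * (↑G⁻¹ : Matrix n n ℂ)), ← smul_mul_assoc, ← hNG, mul_assoc,
      Units.mul_inv, mul_one]
  have hconj : (G : Matrix n n ℂ) * N * (↑G⁻¹ : Matrix n n ℂ) = (l / k) • N := by
    rw [mul_assoc, hNG, mul_smul_comm, hGN, smul_smul, div_eq_inv_mul]
  refine ⟨N.map Complex.re, fun h => by simpa [hNij] using congr_fun₂ h i j, ?_⟩
  have hlim : Tendsto (fun m : ℕ => ((l / k) ^ m • N).map Complex.re) atTop (𝓝 0) := by
    have hlk : ‖l / k‖ < 1 := by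
      rwa [norm_div, div_lt_one (norm_pos_iff.mpr hk0)]
    simpa [Function.comp_def] using
      ((Continuous.matrix_map continuous_id Complex.continuous_re).tendsto 0).comp
        (by simpa using (tendsto_pow_atTop_nhds_zero_of_norm_lt_one hlk).smul_const N)
  refine hlim.congr fun m => ?_
  rw [← Units.conj_pow_eq_smul hconj m, coe_map_algebraMap_pow, coe_map_algebraMap_pow_inv,
    map_re_ofReal_mul_mul_ofReal]

theorem norm_eq_norm_of_forall_tendsto_conj {g : GL n ℝ}
    (hg : ∀ v : GL n ℝ, Tendsto (fun k : ℕ => g ^ k * v * (g ^ k)⁻¹) atTop (𝓝 1) → v = 1)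
    {l k : ℂ} (hl : l ∈ spectrum ℂ ((g : Matrix n n ℝ).map (algebraMap ℝ ℂ)))
    (hk : k ∈ spectrum ℂ ((g : Matrix n n ℝ).map (algebraMap ℝ ℂ))) : ‖l‖ = ‖k‖ := by
  have no_gap : ∀ {l k : ℂ}, l ∈ spectrum ℂ ((g : Matrix n n ℝ).map (algebraMap ℝ ℂ)) →
      k ∈ spectrum ℂ ((g : Matrix n n ℝ).map (algebraMap ℝ ℂ)) → ¬ ‖l‖ < ‖k‖ := by
    intro l k hl hk hlt
    obtain ⟨P, hP, hlim⟩ := exists_ne_zero_tendsto_conj_pow_of_norm_lt g hl hk hlt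
    obtain ⟨v, hv, hvlim⟩ := exists_ne_one_tendsto_conj_of_tendsto_zero (fun k => g ^ k) hP hlim
    exact hv (hg v hvlim)
  exact le_antisymm (le_of_not_gt (no_gap hk hl)) (le_of_not_gt (no_gap hl hk))

end GeneralLinearGroup

end Matrix

open NormedSpace in
theorem exp_apply_apply_of_derivation {𝕜 E : Type*} [RCLike 𝕜] [NormedAddCommGroup E]
    [NormedSpace 𝕜 E] [CompleteSpace E] (B : E →L[𝕜] E →L[𝕜] E) (D : E →L[𝕜] E)
    (hD : ∀ x y, D (B x y) = B (D x) y + B x (D y)) (x y : E) :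
    exp D (B x y) = B (exp D x) (exp D y) := by
  set f : 𝕜 → E := fun t => exp ((-t) • D) (B (exp (t • D) x) (exp (t • D) y))
  have hf : ∀ t, HasDerivAt f 0 t := by
    intro t
    have hexp := hasDerivAt_exp_smul_const' (𝕂 := 𝕜) D t
    have hexpneg : HasDerivAt (fun s : 𝕜 => exp ((-s) • D)) ((-1 : 𝕜) • (exp ((-t) • D) * D)) t :=
      (hasDerivAt_exp_smul_const (𝕂 := 𝕜) D (-t)).scomp t (hasDerivAt_neg t)
    have hB := (B.hasFDerivAt.comp_hasDerivAt t (hexp.clm_apply (hasDerivAt_const t x))).clm_apply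
      (hexp.clm_apply (hasDerivAt_const t y))
    refine (hexpneg.clm_apply hB).congr_deriv ?_
    simp [mul_apply_eq_comp, ← hD]
  have hconst : f 1 = f 0 :=
    is_const_of_deriv_eq_zero (fun t => (hf t).differentiableAt) (fun t => (hf t).deriv) 1 0
  have hinv : ∀ w, exp D (exp (-D) w) = w := fun w => by
    let : NormedAlgebra ℚ (E →L[𝕜] E) := NormedAlgebra.restrictScalars ℚ 𝕜 _
    rw [← mul_apply_eq_comp, ← exp_add_of_commute (Commute.refl D).neg_right, add_neg_cancel,
      exp_zero, one_apply_eq_self]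
  simpa [f, hinv] using congr_arg (⇑(exp D)) hconst.symm

section AutGroup

variable {n : Type*} [Fintype n] [DecidableEq n]

def autGroup (B : (n → ℝ) →L[ℝ] (n → ℝ) →L[ℝ] (n → ℝ)) : Subgroup (GL n ℝ) where
  carrier := {g | ∀ x y, (g : Matrix n n ℝ) *ᵥ B x y = B (g *ᵥ x) (g *ᵥ y)}
  one_mem' := by simp
  mul_mem' {g h} hg hh x y := by
    rw [Units.val_mul, ← mulVec_mulVec, hh, hg, mulVec_mulVec, mulVec_mulVec]
  inv_mem' {g} hg x y := by
    have h := hg (↑g⁻¹ *ᵥ x) (↑g⁻¹ *ᵥ y)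
    simp only [mulVec_mulVec, Units.mul_inv, one_mulVec] at h
    rw [← h, mulVec_mulVec, Units.inv_mul, one_mulVec]

open NormedSpace in
theorem mem_autGroup_of_val_eq_exp {B : (n → ℝ) →L[ℝ] (n → ℝ) →L[ℝ] (n → ℝ)} {u : GL n ℝ}
    {A : Matrix n n ℝ} (hu : (u : Matrix n n ℝ) = exp A)
    (hA : ∀ x y, A *ᵥ B x y = B (A *ᵥ x) y + B x (A *ᵥ y)) : u ∈ autGroup B := by
  let φ : Matrix n n ℝ ≃ₐ[ℝ] ((n → ℝ) →L[ℝ] (n → ℝ)) :=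
    Matrix.toLinAlgEquiv'.trans (Module.End.toContinuousLinearMap (n → ℝ))
  have hφ : ∀ M v, φ M v = M *ᵥ v := fun _ _ => rfl
  have hexp : φ (exp A) = exp (φ A) :=
    open scoped Matrix.Norms.Operator in
    map_exp φ φ.toLinearMap.continuous_of_finiteDimensional A
  intro x y
  simp only [hu, ← hφ, hexp]
  exact exp_apply_apply_of_derivation B (φ A) (by simpa only [hφ] using hA) x y

theorem spectrum.eventually_nnnorm_pow_le_of_spectralRadius_lt {A : Type*} [NormedRing A]
    [NormedAlgebra ℂ A] [CompleteSpace A] {a : A} {c : NNReal} (h : spectralRadius ℂ a < c) :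
    ∀ᶠ k : ℕ in atTop, ‖a ^ k‖₊ ≤ c ^ k := by
  filter_upwards [(pow_nnnorm_pow_one_div_tendsto_nhds_spectralRadius a).eventually_lt_const h,
    eventually_ne_atTop 0] with k hk hk0
  have hk' := ENNReal.rpow_le_rpow hk.le (by positivity : (0 : ℝ) ≤ k)
  rw [← ENNReal.rpow_mul, one_div_mul_cancel (by exact_mod_cast hk0), ENNReal.rpow_one,
    ENNReal.rpow_natCast, ← ENNReal.coe_pow] at hk'
  exact_mod_cast hk'

open scoped Matrix.Norms.Operator

theorem eventually_norm_pow_le_of_spectralRadius_lt {g : GL n ℝ} {c : NNReal}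
    (h : spectralRadius ℂ ((g : Matrix n n ℝ).map (algebraMap ℝ ℂ)) < c) :
    ∀ᶠ k : ℕ in atTop, ‖(↑(g ^ k) : Matrix n n ℝ)‖ ≤ c ^ k := by
  filter_upwards [spectrum.eventually_nnnorm_pow_le_of_spectralRadius_lt h] with k hk
  change ‖(↑(GeneralLinearGroup.map (algebraMap ℝ ℂ) g) : Matrix n n ℂ) ^ k‖₊ ≤ _ at hk
  rw [← Units.val_pow_eq_pow_val, GeneralLinearGroup.coe_map_algebraMap_pow,
    linfty_opNNNorm_map_algebraMap] at hk
  exact_mod_cast hk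

theorem eq_zero_of_mem_autGroup_of_spectralRadius_lt {B : (n → ℝ) →L[ℝ] (n → ℝ) →L[ℝ] (n → ℝ)}
    {g : GL n ℝ} (hg : g ∈ autGroup B) {c₁ c₂ : NNReal} (hc : c₁ ^ 2 * c₂ < 1)
    (h₁ : spectralRadius ℂ ((g : Matrix n n ℝ).map (algebraMap ℝ ℂ)) < c₁)
    (h₂ : spectralRadius ℂ ((↑g⁻¹ : Matrix n n ℝ).map (algebraMap ℝ ℂ)) < c₂) : B = 0 := by
  refine ContinuousLinearMap.ext fun x => ContinuousLinearMap.ext fun y => ?_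
  have hlim : Tendsto (fun k : ℕ => ‖B‖ * ‖x‖ * ‖y‖ * ((c₁ : ℝ) ^ 2 * c₂) ^ k) atTop (𝓝 0) := by
    simpa using (tendsto_pow_atTop_nhds_zero_of_lt_one (by positivity)
      (by exact_mod_cast hc)).const_mul (‖B‖ * ‖x‖ * ‖y‖)
  refine norm_le_zero_iff.mp (ge_of_tendsto hlim ?_)
  filter_upwards [eventually_norm_pow_le_of_spectralRadius_lt h₁,
    eventually_norm_pow_le_of_spectralRadius_lt h₂] with k hk₁ hk₂
  rw [inv_pow] at hk₂
  have hB : B x y = (↑(g ^ k)⁻¹ : Matrix n n ℝ) *ᵥ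
      B ((↑(g ^ k) : Matrix n n ℝ) *ᵥ x) (↑(g ^ k) *ᵥ y) := by
    rw [inv_mem (pow_mem hg k), mulVec_mulVec, mulVec_mulVec, Units.inv_mul, one_mulVec,
      one_mulVec]
  calc ‖B x y‖
      ≤ ‖(↑(g ^ k)⁻¹ : Matrix n n ℝ)‖ * (‖B‖ * (‖(↑(g ^ k) : Matrix n n ℝ)‖ * ‖x‖)
          * (‖(↑(g ^ k) : Matrix n n ℝ)‖ * ‖y‖)) := by
        rw [hB]
        refine (linfty_opNorm_mulVec _ _).trans (mul_le_mul_of_nonneg_left ?_ (norm_nonneg _))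
        refine (B.le_opNorm₂ _ _).trans ?_
        gcongr <;> exact linfty_opNorm_mulVec _ _
    _ ≤ c₂ ^ k * (‖B‖ * (c₁ ^ k * ‖x‖) * (c₁ ^ k * ‖y‖)) := by gcongr
    _ = ‖B‖ * ‖x‖ * ‖y‖ * ((c₁ : ℝ) ^ 2 * c₂) ^ k := by ring

theorem eq_zero_of_mem_autGroup_of_forall_norm_eq
    {B : (n → ℝ) →L[ℝ] (n → ℝ) →L[ℝ] (n → ℝ)} {g : GL n ℝ} (hg : g ∈ autGroup B) {μ : ℂ}
    (hμ : μ ∈ spectrum ℂ ((g : Matrix n n ℝ).map (algebraMap ℝ ℂ)))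
    (hall : ∀ l ∈ spectrum ℂ ((g : Matrix n n ℝ).map (algebraMap ℝ ℂ)), ‖l‖ = ‖μ‖)
    (hμ1 : ‖μ‖ < 1) : B = 0 := by
  have hμ0 : μ ≠ 0 := by
    rintro rfl
    exact (spectrum.zero_notMem_iff ℂ).mpr (GeneralLinearGroup.map (algebraMap ℝ ℂ) g).isUnit hμ
  -- the eigenvalues of `g` have modulus `s ^ 4`, those of `g⁻¹` modulus `s⁻¹ ^ 4`; the bounds
  -- `c₁ = s ^ 3` and `c₂ = s⁻¹ ^ 5` are strictly larger and `c₁ ^ 2 * c₂ = s < 1`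
  set s := NNReal.sqrt (NNReal.sqrt ‖μ‖₊)
  have hs4 : s ^ 4 = ‖μ‖₊ := by
    rw [show 4 = 2 * 2 from rfl, pow_mul, NNReal.sq_sqrt, NNReal.sq_sqrt]
  have hs0 : 0 < s := NNReal.sqrt_pos.mpr (NNReal.sqrt_pos.mpr (nnnorm_pos.mpr hμ0))
  have hs1 : s < 1 := by
    rw [← pow_lt_one_iff_of_nonneg (by positivity) (by norm_num : 4 ≠ 0), hs4]
    exact_mod_cast hμ1
  refine eq_zero_of_mem_autGroup_of_spectralRadius_lt hg (c₁ := s ^ 3) (c₂ := s⁻¹ ^ 5) ?_ ?_ ?_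
  · rw [show (s ^ 3) ^ 2 * s⁻¹ ^ 5 = s by field_simp]
    exact hs1
  · refine spectrum.spectralRadius_lt_of_forall_lt_of_nonempty ⟨μ, hμ⟩ fun l hl => ?_
    rw [show ‖l‖₊ = s ^ 4 by rw [hs4]; exact NNReal.eq (hall l hl)]
    exact pow_lt_pow_right_of_lt_one₀ hs0 hs1 (by norm_num)
  · refine spectrum.spectralRadius_lt_of_forall_lt_of_nonempty
      ⟨μ⁻¹, GeneralLinearGroup.inv_mem_spectrum_map_inv_iff.mpr hμ⟩ fun l hl => ?_
    have hl' := hall l⁻¹ (GeneralLinearGroup.inv_mem_spectrum_map_inv_iff.mp (by rwa [inv_inv]))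
    have hl'' : ‖l‖₊ = ‖μ‖₊⁻¹ := by
      rw [← inv_inv ‖l‖₊, ← nnnorm_inv, show ‖l⁻¹‖₊ = ‖μ‖₊ from NNReal.eq hl']
    rw [hl'', ← hs4, ← inv_pow]
    exact pow_lt_pow_right₀ (one_lt_inv_iff₀.mpr ⟨hs0, hs1⟩) (by norm_num)

end AutGroup

noncomputable def coordBracket : (Fin d → ℝ) →L[ℝ] (Fin d → ℝ) →L[ℝ] (Fin d → ℝ) :=
  LinearMap.toContinuousLinearMap
    (LinearMap.toContinuousLinearMap.toLinearMap ∘ₗ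
      ((LieModule.toEnd ℝ L L : L →ₗ[ℝ] Module.End ℝ L).compl₁₂ b.equivFun.symm.toLinearMap
        b.equivFun.symm.toLinearMap).compr₂ b.equivFun.toLinearMap)

theorem coordBracket_equivFun (X Y : L) :
    coordBracket b (b.equivFun X) (b.equivFun Y) = b.equivFun ⁅X, Y⁆ := by
  simp [coordBracket]

theorem toMatrix_ad_mulVec (X : L) (v : Fin d → ℝ) :
    LinearMap.toMatrix b b (LieAlgebra.ad ℝ L X) *ᵥ v = coordBracket b (b.equivFun X) v := by
  obtain ⟨Y, rfl⟩ := b.equivFun.surjective v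
  rw [coordBracket_equivFun]
  exact LinearMap.toMatrix_mulVec_repr b b (LieAlgebra.ad ℝ L X) Y

theorem adjointGroup_le_autGroup : adjointGroup b ≤ autGroup (coordBracket b) := by
  refine (Subgroup.closure_le _).mpr ?_
  rintro u ⟨X, hX⟩
  refine mem_autGroup_of_val_eq_exp hX fun y z => ?_
  obtain ⟨Y, rfl⟩ := b.equivFun.surjective y
  obtain ⟨Z, rfl⟩ := b.equivFun.surjective z
  simp only [toMatrix_ad_mulVec, coordBracket_equivFun]
  rw [← map_add, leibniz_lie]

theorem isLieAbelian_of_coordBracket_eq_zero (h : coordBracket b = 0) : IsLieAbelian L :=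
  ⟨fun X Y => b.equivFun.injective (by rw [← coordBracket_equivFun, h]; simp)⟩

theorem adjointGroup_eq_bot [IsLieAbelian L] : adjointGroup b = ⊥ := by
  refine eq_bot_iff.mpr ((Subgroup.closure_le _).mpr ?_)
  rintro u ⟨X, hX⟩
  have hX0 : LieAlgebra.ad ℝ L X = 0 := by
    ext Y
    exact trivial_lie_zero L L X Y
  exact Subgroup.mem_bot.mpr (Units.ext (by simpa [hX0] using hX))

theorem one_le_norm_of_forall_norm_eq {g : GL (Fin d) ℝ} (hg : g ∈ adjointGroup b) {μ : ℂ}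
    (hμ : μ ∈ spectrum ℂ ((g : Matrix (Fin d) (Fin d) ℝ).map (algebraMap ℝ ℂ)))
    (hall : ∀ l ∈ spectrum ℂ ((g : Matrix (Fin d) (Fin d) ℝ).map (algebraMap ℝ ℂ)), ‖l‖ = ‖μ‖) :
    1 ≤ ‖μ‖ := by
  by_contra! hμ1
  have := isLieAbelian_of_coordBracket_eq_zero b
    (eq_zero_of_mem_autGroup_of_forall_norm_eq (adjointGroup_le_autGroup b hg) hμ hall hμ1)
  rw [adjointGroup_eq_bot, Subgroup.mem_bot] at hg
  subst hg
  have : Nontrivial (Matrix (Fin d) (Fin d) ℂ) :=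
    not_subsingleton_iff_nontrivial.mp fun _ => by simp [spectrum.of_subsingleton] at hμ
  rw [Units.val_one, Matrix.map_one _ (map_zero _) (_root_.map_one _), spectrum.one_eq,
    Set.mem_singleton_iff] at hμ
  simp [hμ] at hμ1

/-- Let `G` be a connected real Lie group (encoded through its adjoint image
`Ad(G) = Int(𝔤) ⊆ GL(𝔤)`, `𝔤` its finite-dimensional Lie algebra) such that for every
`g` the contraction subgroup of `Ad(g)` in `GL(𝔤)` is trivial. Then all (complex)
eigenvalues of every `Ad(g)` have absolute value `1`, i.e. `G` is of type R. -/
theorem stmt17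
    (hcontr : ∀ g ∈ adjointGroup b, ∀ v : GL (Fin d) ℝ,
      Tendsto (fun n : ℕ => g ^ n * v * (g ^ n)⁻¹) atTop (nhds 1) → v = 1) :
    ∀ g ∈ adjointGroup b, ∀ μ : ℂ,
      μ ∈ spectrum ℂ (((g : GL (Fin d) ℝ) : Matrix (Fin d) (Fin d) ℝ).map
        (algebraMap ℝ ℂ)) →
      ‖μ‖ = 1 := by
  intro g hg μ hμ
  have hμinv := GeneralLinearGroup.inv_mem_spectrum_map_inv_iff.mpr hμ
  have h₁ := one_le_norm_of_forall_norm_eq b hg hμ fun l hl =>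
    GeneralLinearGroup.norm_eq_norm_of_forall_tendsto_conj (hcontr g hg) hl hμ
  have h₂ := one_le_norm_of_forall_norm_eq b (inv_mem hg) hμinv fun l hl =>
    GeneralLinearGroup.norm_eq_norm_of_forall_tendsto_conj (hcontr _ (inv_mem hg)) hl hμinv
  rw [norm_inv] at h₂
  exact le_antisymm ((one_le_inv₀ (zero_lt_one.trans_le h₁)).mp h₂) h₁
end
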